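/- For every α with 0 < α < 1, every x > 0 and every z with 0 < z < 1, one has z < ((z + x)^{1−α} − x^{1−α}) / ((1 + x)^{1−α} − x^{1−α}) < z^{1−α}. -/

import Mathlib

/-!
Write `β = 1 - α` and `f t = t ^ β`, which is strictly concave on `[0, ∞)`. The lower bound says
that on `[x, x + 1]` the graph of `f` lies strictly above its chord. For the upper bound, the
increments `f (t + z) - f t` strictly decrease in `t`, so comparing `t = x` with `t = z * x` and
using the homogeneity `f (z * t) = z ^ β * f t` gives
`f (z + x) - f x < z ^ β * (f (1 + x) - f x)`.
-/

open Real Set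

namespace StrictConcaveOn

variable {𝕜 : Type*} [Field 𝕜] [LinearOrder 𝕜] [IsStrictOrderedRing 𝕜] {s : Set 𝕜} {f : 𝕜 → 𝕜}

theorem mul_sub_lt_add_sub (hf : StrictConcaveOn 𝕜 s f) {x t : 𝕜} (hx : x ∈ s)
    (hx₁ : x + 1 ∈ s) (ht₀ : 0 < t) (ht₁ : t < 1) :
    t * (f (x + 1) - f x) < f (x + t) - f x := by
  have hxt : x + t ∈ s := hf.1.ordConnected.out hx hx₁ ⟨by linarith, by linarith⟩
  have key := hf.secant_strict_mono hx hxt hx₁ (by linarith) (by linarith) (by linarith)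
  rw [add_sub_cancel_left, add_sub_cancel_left, div_one, lt_div_iff₀ ht₀] at key
  linarith

theorem add_sub_lt_add_sub (hf : StrictConcaveOn 𝕜 s f) {a b h : 𝕜} (ha : a ∈ s)
    (hbh : b + h ∈ s) (hab : a < b) (hh : 0 < h) :
    f (b + h) - f b < f (a + h) - f a := by
  have hb : b ∈ s := hf.1.ordConnected.out ha hbh ⟨hab.le, by linarith⟩
  have hah : a + h ∈ s := hf.1.ordConnected.out ha hbh ⟨by linarith, by linarith⟩
  have chord_at_b_lt_long_chord :
      (f (b + h) - f b) / h < (f (b + h) - f a) / (b + h - a) := by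
    have key := hf.secant_strict_mono hbh ha hb (by linarith) (by linarith) hab
    convert key using 1 <;> rw [← neg_div_neg_eq] <;> ring_nf
  have long_chord_lt_chord_at_a :
      (f (b + h) - f a) / (b + h - a) < (f (a + h) - f a) / h := by
    have key := hf.secant_strict_mono ha hah hbh (by linarith) (by linarith) (by linarith)
    rwa [add_sub_cancel_left] at key
  exact (div_lt_div_iff_of_pos_right hh).1
    (chord_at_b_lt_long_chord.trans long_chord_lt_chord_at_a)

end StrictConcaveOn

theorem g_alpha_bounds (α x z : ℝ) (hα0 : 0 < α) (hα1 : α < 1)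
    (hx : 0 < x) (hz0 : 0 < z) (hz1 : z < 1) :
    z < ((z + x) ^ (1 - α) - x ^ (1 - α)) / ((1 + x) ^ (1 - α) - x ^ (1 - α)) ∧
      ((z + x) ^ (1 - α) - x ^ (1 - α)) / ((1 + x) ^ (1 - α) - x ^ (1 - α)) < z ^ (1 - α) := by
  set β := 1 - α
  have hβ : 0 < β := sub_pos.2 hα1
  have hf : StrictConcaveOn ℝ (Ici 0) (fun t : ℝ ↦ t ^ β) := strictConcaveOn_rpow hβ (by linarith)
  have hD : 0 < (1 + x) ^ β - x ^ β := sub_pos.2 (rpow_lt_rpow hx.le (by linarith) hβ)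
  constructor
  · rw [lt_div_iff₀ hD]
    have := hf.mul_sub_lt_add_sub (mem_Ici.2 hx.le) (mem_Ici.2 (by linarith)) hz0 hz1
    simpa only [add_comm x] using this
  · rw [div_lt_iff₀ hD]
    calc (z + x) ^ β - x ^ β = (x + z) ^ β - x ^ β := by rw [add_comm]
      _ < (z * x + z) ^ β - (z * x) ^ β :=
        hf.add_sub_lt_add_sub (mem_Ici.2 (by positivity)) (mem_Ici.2 (by linarith))
          (mul_lt_of_lt_one_left hx hz1) hz0
      _ = z ^ β * ((1 + x) ^ β - x ^ β) := by
        rw [show z * x + z = z * (1 + x) by ring, mul_rpow hz0.le (by linarith),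
          mul_rpow hz0.le hx.le]
        ring
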